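/- Let s^β(τ) := ∫₀^∞ (4π β^u τ^{u−1} / Γ(u)) du for τ > 0 and β > 0, and suppose s^β(τ) ≤ C(β,T)/((τ ∧ e^{−2}) (log(τ ∧ e^{−2}))²) for 0 < τ ≤ T. Then for all T' ∈ (0,T] and a ∈ (0,1): ∫₀^{T'} s^β(t)/(T' − t)^a dt ≤ C(β,T,a) / ((T'/2)^a · log((T'/2) ∧ e^{−2})^{−1}). -/

import Mathlib

/-!
Split `(0, T')` at `m = min (T'/2) e⁻²` and write `ℓ = log (1/m) ≥ 2`. On `(0, m]` the kernel
`(T' - τ)^{-a}` is at most `(T'/2)^{-a}`, and the profile `1/(τ log² τ)` has the primitive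
`-1/log τ`, which vanishes at `0⁺`; this part contributes `C (T'/2)^{-a}/ℓ`. On `(m, T')` the profile
is at most its value `1/(m ℓ²)` at `m`, while `∫_m^{T'} (T' - τ)^{-a} dτ ≤ T' (T'/2)^{-a}/(1 - a)`;
since `T'/2 ≤ m (1 + e² T'/2)` and `ℓ ≥ 2`, this part is again `O((T'/2)^{-a}/ℓ)`.
-/

open MeasureTheory

/-- `s^β(τ) = ∫₀^∞ 4π β^u τ^{u−1}/Γ(u) du`. -/
noncomputable def sBeta (β τ : ℝ) : ℝ :=
  ∫ u in Set.Ioi (0:ℝ), 4 * Real.pi * β ^ u * τ ^ (u - 1) / Real.Gamma u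

section

variable {α : Type*} [MeasurableSpace α] {μ : Measure α}

/-- `f` need not be integrable: if it is not, its integral is `0`. -/
theorem setIntegral_union_le {f g h : α → ℝ} {s t : Set α} (hst : Disjoint s t)
    (hs : MeasurableSet s) (ht : MeasurableSet t) (hg : IntegrableOn g s μ)
    (hh : IntegrableOn h t μ) (hg0 : ∀ x ∈ s, 0 ≤ g x) (hh0 : ∀ x ∈ t, 0 ≤ h x)
    (hfg : ∀ x ∈ s, f x ≤ g x) (hfh : ∀ x ∈ t, f x ≤ h x) :
    ∫ x in s ∪ t, f x ∂μ ≤ (∫ x in s, g x ∂μ) + ∫ x in t, h x ∂μ := by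
  by_cases hf : IntegrableOn f (s ∪ t) μ
  · have hfs := hf.mono_set Set.subset_union_left
    have hft := hf.mono_set Set.subset_union_right
    rw [setIntegral_union hst ht hfs hft]
    exact add_le_add (setIntegral_mono_on hfs hg hs hfg) (setIntegral_mono_on hft hh ht hfh)
  · rw [integral_undef hf]
    exact add_nonneg (setIntegral_nonneg hs hg0) (setIntegral_nonneg ht hh0)

end

section

open Real Set

theorem mul_log_sq_pos {t : ℝ} (h0 : 0 < t) (h1 : t < 1) : 0 < t * log t ^ 2 := by
  have : log t ≠ 0 := (log_neg h0 h1).ne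
  positivity

theorem hasDerivAt_neg_inv_log {t : ℝ} (ht : t ≠ 0) (hlog : log t ≠ 0) :
    HasDerivAt (fun t => -(log t)⁻¹) (t * log t ^ 2)⁻¹ t :=
  ((hasDerivAt_log ht).inv hlog).neg.congr_deriv (by field_simp)

/-- With Lean's conventions `log 0 = 0` and `0⁻¹ = 0` the value at `0` is `0`, the limit of
`-(log t)⁻¹` as `t → 0`. -/
theorem continuousAt_neg_inv_log_zero : ContinuousAt (fun t => -(log t)⁻¹) 0 := by
  rw [← continuousWithinAt_compl_self, ContinuousWithinAt]
  simpa using (tendsto_inv_atBot_zero.comp tendsto_log_nhdsNE_zero).neg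

theorem continuousOn_neg_inv_log {x : ℝ} (hx : x < 1) :
    ContinuousOn (fun t => -(log t)⁻¹) (Icc 0 x) := by
  intro t ht
  rcases eq_or_ne t 0 with rfl | ht0
  · exact continuousAt_neg_inv_log_zero.continuousWithinAt
  · have hlog : log t ≠ 0 := (log_neg (lt_of_le_of_ne ht.1 ht0.symm) (ht.2.trans_lt hx)).ne
    exact (hasDerivAt_neg_inv_log ht0 hlog).continuousAt.continuousWithinAt

theorem integrableOn_inv_mul_log_sq {x : ℝ} (hx : x < 1) :
    IntegrableOn (fun t => (t * log t ^ 2)⁻¹) (Ioc 0 x) :=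
  intervalIntegral.integrableOn_deriv_of_nonneg (continuousOn_neg_inv_log hx)
    (fun t ht => hasDerivAt_neg_inv_log ht.1.ne' (log_neg ht.1 (ht.2.trans hx)).ne)
    (fun t ht => by have := ht.1; positivity)

theorem integral_inv_mul_log_sq {x : ℝ} (hx0 : 0 < x) (hx1 : x < 1) :
    ∫ t in Ioc 0 x, (t * log t ^ 2)⁻¹ = -(log x)⁻¹ := by
  rw [← intervalIntegral.integral_of_le hx0.le,
    intervalIntegral.integral_eq_sub_of_hasDerivAt_of_le hx0.le (continuousOn_neg_inv_log hx1)
      (fun t ht => hasDerivAt_neg_inv_log ht.1.ne' (log_neg ht.1 (ht.2.trans hx1)).ne)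
      ((intervalIntegrable_iff_integrableOn_Ioc_of_le hx0.le).2 (integrableOn_inv_mul_log_sq hx1))]
  simp

theorem monotoneOn_mul_log_sq : MonotoneOn (fun t => t * log t ^ 2) (Ioc 0 (exp (-2))) := by
  have hderiv : ∀ t, 0 < t → HasDerivAt (fun t => t * log t ^ 2) (log t * (log t + 2)) t :=
    fun t ht => ((hasDerivAt_id t).mul ((hasDerivAt_log ht.ne').pow 2)).congr_deriv
      (by simp only [id, Pi.pow_apply]; field_simp; ring)
  refine monotoneOn_of_hasDerivWithinAt_nonneg (convex_Ioc _ _)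
    (fun t ht => (hderiv t ht.1).continuousAt.continuousWithinAt)
    (fun t ht => (hderiv t (interior_subset ht).1).hasDerivWithinAt) fun t ht => ?_
  rw [interior_Ioc] at ht
  have : log t < -2 := by rw [← log_exp (-2)]; exact log_lt_log ht.1 ht.2
  nlinarith

noncomputable def logProfile (τ : ℝ) : ℝ :=
  (min τ (exp (-2)) * log (min τ (exp (-2))) ^ 2)⁻¹

theorem logProfile_of_le {τ : ℝ} (h : τ ≤ exp (-2)) : logProfile τ = (τ * log τ ^ 2)⁻¹ := by
  rw [logProfile, min_eq_left h]

theorem logProfile_nonneg {τ : ℝ} (hτ : 0 ≤ τ) : 0 ≤ logProfile τ := by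
  have : 0 ≤ min τ (exp (-2)) := le_min hτ (exp_pos _).le
  unfold logProfile
  positivity

theorem logProfile_antitoneOn : AntitoneOn logProfile (Ioi 0) := by
  intro σ hσ τ hτ hστ
  have hmem : ∀ {t : ℝ}, 0 < t → min t (exp (-2)) ∈ Ioc 0 (exp (-2)) := fun ht =>
    ⟨lt_min ht (exp_pos _), min_le_right _ _⟩
  have hpos : 0 < min σ (exp (-2)) * log (min σ (exp (-2))) ^ 2 :=
    mul_log_sq_pos (hmem hσ).1 ((hmem hσ).2.trans_lt (exp_lt_one_iff.2 (by norm_num)))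
  exact inv_anti₀ hpos (monotoneOn_mul_log_sq (hmem hσ) (hmem hτ) (min_le_min_right _ hστ))

theorem le_min_exp_neg_two_mul {x : ℝ} (hx : 0 ≤ x) :
    x ≤ min x (exp (-2)) * (1 + x * exp 2) := by
  rcases min_cases x (exp (-2)) with ⟨h, -⟩ | ⟨h, -⟩ <;> rw [h]
  · nlinarith [mul_nonneg (mul_nonneg hx hx) (exp_pos 2).le]
  · rw [mul_add, mul_one, ← mul_assoc, mul_comm _ x, mul_assoc, ← exp_add]
    norm_num
    exact (exp_pos _).le

theorem two_le_log_inv_min_exp_neg_two {x : ℝ} (hx : 0 < x) :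
    2 ≤ log (min x (exp (-2)))⁻¹ := by
  rw [log_inv, le_neg]
  exact (log_le_log (lt_min hx (exp_pos _)) (min_le_right _ _)).trans_eq (log_exp _)

theorem integrableOn_sub_rpow {b c r : ℝ} (hbc : b ≤ c) (hr : -1 < r) :
    IntegrableOn (fun τ => (c - τ) ^ r) (Ioo b c) := by
  have h := (intervalIntegral.intervalIntegrable_rpow' hr (a := c - c) (b := c - b)).comp_sub_left c
  simp only [sub_sub_cancel] at h
  exact (intervalIntegrable_iff_integrableOn_Ioo_of_le hbc).1 h.symm

theorem integral_Ioo_sub_rpow {b c r : ℝ} (hbc : b ≤ c) (hr : -1 < r) :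
    ∫ τ in Ioo b c, (c - τ) ^ r = (c - b) ^ (r + 1) / (r + 1) := by
  rw [← integral_Ioc_eq_integral_Ioo, ← intervalIntegral.integral_of_le hbc,
    intervalIntegral.integral_comp_sub_left (fun τ => τ ^ r), sub_self,
    integral_rpow (Or.inl hr), zero_rpow (by linarith)]
  ring

theorem setIntegral_div_sub_rpow_le_of_le_logProfile {s : ℝ → ℝ} {C a T' : ℝ} (hC : 0 ≤ C)
    (ha : a ∈ Ioo 0 1) (hT' : 0 < T') (hs : ∀ τ ∈ Ioo 0 T', s τ ≤ C * logProfile τ) :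
    ∫ τ in Ioo 0 T', s τ / (T' - τ) ^ a ≤
      C * (1 + (1 + T' / 2 * exp 2) / (1 - a)) /
        ((T' / 2) ^ a * log (min (T' / 2) (exp (-2)))⁻¹) := by
  obtain ⟨ha0, ha1⟩ := ha
  set x := T' / 2 with hx
  set m := min x (exp (-2))
  set ℓ := log m⁻¹ with hℓ
  have hx0 : 0 < x := by positivity
  have hm0 : 0 < m := lt_min hx0 (exp_pos _)
  have hmx : m ≤ x := min_le_left _ _
  have hm1 : m < 1 := (min_le_right _ _).trans_lt (exp_lt_one_iff.2 (by norm_num))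
  have hℓ2 : 2 ≤ ℓ := two_le_log_inv_min_exp_neg_two hx0
  have hlogm : log m = -ℓ := by rw [hℓ, log_inv, neg_neg]
  have hpm : logProfile m = (m * ℓ ^ 2)⁻¹ := by
    rw [logProfile_of_le (min_le_right _ _), hlogm, neg_sq]
  have hnear : ∀ τ ∈ Ioc 0 m, s τ / (T' - τ) ^ a ≤ C * (τ * log τ ^ 2)⁻¹ / x ^ a := by
    rintro τ ⟨hτ0, hτm⟩
    rw [← logProfile_of_le (hτm.trans (min_le_right _ _))]
    gcongr
    · exact mul_nonneg hC (logProfile_nonneg hτ0.le)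
    · exact hs τ ⟨hτ0, by linarith⟩
    · linarith
  have hfar : ∀ τ ∈ Ioo m T', s τ / (T' - τ) ^ a ≤ C * (m * ℓ ^ 2)⁻¹ * (T' - τ) ^ (-a) := by
    rintro τ ⟨hmτ, hτT'⟩
    rw [rpow_neg (by linarith), ← div_eq_mul_inv, ← hpm]
    gcongr
    exact (hs τ ⟨hm0.trans hmτ, hτT'⟩).trans
      (mul_le_mul_of_nonneg_left (logProfile_antitoneOn hm0 (hm0.trans hmτ) hmτ.le) hC)
  have hpow : (T' - m) ^ (1 - a) ≤ 2 * x / x ^ a := by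
    rw [rpow_sub (by linarith), rpow_one]
    gcongr <;> linarith
  have hkey : 2 * x / (m * ℓ) ≤ 1 + x * exp 2 := by
    rw [div_le_iff₀ (by positivity)]
    nlinarith [le_min_exp_neg_two_mul hx0.le, exp_pos 2]
  rw [← Ioc_union_Ioo_eq_Ioo hm0.le (by linarith)]
  calc ∫ τ in Ioc 0 m ∪ Ioo m T', s τ / (T' - τ) ^ a
      ≤ (∫ τ in Ioc 0 m, C * (τ * log τ ^ 2)⁻¹ / x ^ a)
        + ∫ τ in Ioo m T', C * (m * ℓ ^ 2)⁻¹ * (T' - τ) ^ (-a) :=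
        setIntegral_union_le (Ioc_disjoint_Ioi_same.mono_right Ioo_subset_Ioi_self)
          measurableSet_Ioc measurableSet_Ioo
          (((integrableOn_inv_mul_log_sq hm1).const_mul C).div_const _)
          ((integrableOn_sub_rpow (by linarith) (by linarith)).const_mul _)
          (fun τ hτ => by have := hτ.1; positivity) (fun τ hτ => by have := hτ.2; positivity)
          hnear hfar
    _ = C / (x ^ a * ℓ) + C * (m * ℓ ^ 2)⁻¹ * ((T' - m) ^ (1 - a) / (1 - a)) := by
        rw [integral_div, integral_const_mul, integral_const_mul, integral_inv_mul_log_sq hm0 hm1,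
          integral_Ioo_sub_rpow (by linarith) (by linarith), hlogm, neg_add_eq_sub]
        ring
    _ ≤ C / (x ^ a * ℓ) + C * (m * ℓ ^ 2)⁻¹ * (2 * x / x ^ a / (1 - a)) := by
        gcongr
    _ = C / (x ^ a * ℓ) + C / ((1 - a) * x ^ a * ℓ) * (2 * x / (m * ℓ)) := by
        have : 0 < 1 - a := by linarith
        have : 0 < x ^ a := by positivity
        have : 0 < ℓ := by linarith
        field_simp
    _ ≤ C / (x ^ a * ℓ) + C / ((1 - a) * x ^ a * ℓ) * (1 + x * exp 2) := by gcongr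
    _ = C * (1 + (1 + x * exp 2) / (1 - a)) / (x ^ a * ℓ) := by field_simp

end

theorem stmt_17_general (β T a : ℝ) (ha : a ∈ Set.Ioo (0:ℝ) 1)
    (C₁ : ℝ)
    (hs : ∀ τ ∈ Set.Ioc (0:ℝ) T,
      sBeta β τ ≤ C₁ / (min τ (Real.exp (-2)) * (Real.log (min τ (Real.exp (-2)))) ^ 2)) :
    ∃ C : ℝ, 0 < C ∧ ∀ T' ∈ Set.Ioc (0:ℝ) T,
      (∫ τ in Set.Ioo (0:ℝ) T', sBeta β τ / (T' - τ) ^ a)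
        ≤ C / ((T' / 2) ^ a * Real.log ((min (T' / 2) (Real.exp (-2)))⁻¹)) := by
  refine ⟨max (max C₁ 0 * (1 + (1 + T / 2 * Real.exp 2) / (1 - a))) 1,
    lt_max_of_lt_right one_pos, fun T' ⟨hT'0, hT'T⟩ => ?_⟩
  have hbound : ∀ τ ∈ Set.Ioo 0 T', sBeta β τ ≤ max C₁ 0 * logProfile τ := fun τ hτ =>
    ((hs τ ⟨hτ.1, by linarith [hτ.2]⟩).trans_eq (div_eq_mul_inv _ _)).trans
      (mul_le_mul_of_nonneg_right (le_max_left _ _) (logProfile_nonneg hτ.1.le))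
  refine (setIntegral_div_sub_rpow_le_of_le_logProfile (le_max_right _ _) ha hT'0 hbound).trans ?_
  have hlog := two_le_log_inv_min_exp_neg_two (half_pos hT'0)
  have h1a : 0 < 1 - a := sub_pos.2 ha.2
  gcongr
  refine le_trans ?_ (le_max_left _ 1)
  gcongr

/-- Assuming the known bound `s^β(τ) ≤ C₁/((τ ∧ e⁻²)(log(τ ∧ e⁻²))²)` on `(0,T]`,
for all `T' ∈ (0,T]` and `a ∈ (0,1)`:
`∫₀^{T'} s^β(t)/(T'−t)^a dt ≤ C/((T'/2)^a · log((T'/2 ∧ e⁻²)⁻¹))`. -/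
theorem stmt_17 (β T a : ℝ) (hβ : 0 < β) (hT : 0 < T) (ha : a ∈ Set.Ioo (0:ℝ) 1)
    (C₁ : ℝ)
    (hs : ∀ τ ∈ Set.Ioc (0:ℝ) T,
      sBeta β τ ≤ C₁ / (min τ (Real.exp (-2)) * (Real.log (min τ (Real.exp (-2)))) ^ 2)) :
    ∃ C : ℝ, 0 < C ∧ ∀ T' ∈ Set.Ioc (0:ℝ) T,
      (∫ τ in Set.Ioo (0:ℝ) T', sBeta β τ / (T' - τ) ^ a)
        ≤ C / ((T' / 2) ^ a * Real.log ((min (T' / 2) (Real.exp (-2)))⁻¹)) :=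
  stmt_17_general β T a ha C₁ hs
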